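/- arXiv:2311.03688 — 6 statements merged into one kernel-verified Lean document; each statement's English description precedes it below -/
import Mathlib

section
/- Let K be a field and let ℓ_1,…,ℓ_n ∈ K[x_1,…,x_m] be nonzero linear forms, and let φ : K[y_1,…,y_n] → Frac(K[x_1,…,x_m]) be the K-algebra homomorphism with φ(y_i) = 1/ℓ_i. If i_1,…,i_u are u ≥ 2 pairwise distinct indices and a_1,…,a_u ∈ K are all nonzero with a_1ℓ_{i_1}+⋯+a_uℓ_{i_u} = 0, then the polynomial ∂(a_1y_{i_1}+⋯+a_uy_{i_u}) := Σ_{j=1}^u a_j · y_{i_1}⋯ŷ_{i_j}⋯y_{i_u} (the j-th variable omitted from the product) is a nonzero homogeneous polynomial of degree u−1 that lies in ker φ. -/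
open MvPolynomial

/-- If `ℓ_{i₁},…,ℓ_{i_u}` (distinct indices, `u ≥ 2`) satisfy a dependency
`a₁ℓ_{i₁}+⋯+a_uℓ_{i_u} = 0` with all `aⱼ ≠ 0`, then
`∂(a₁y_{i₁}+⋯+a_u y_{i_u}) = Σⱼ aⱼ y_{i₁}⋯ŷ_{iⱼ}⋯y_{i_u}` is a nonzero homogeneous
polynomial of degree `u−1` lying in the kernel of the Orlik–Terao map `φ`. -/
theorem stmt_1 (K : Type*) [Field K] (n m u : ℕ) (hu : 2 ≤ u)
    (ℓ : Fin n → MvPolynomial (Fin m) K)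
    (hℓ0 : ∀ i, ℓ i ≠ 0) (hℓ1 : ∀ i, (ℓ i).IsHomogeneous 1)
    (φ : MvPolynomial (Fin n) K →ₐ[K] FractionRing (MvPolynomial (Fin m) K))
    (hφ : ∀ i, φ (X i) =
      (algebraMap (MvPolynomial (Fin m) K) (FractionRing (MvPolynomial (Fin m) K)) (ℓ i))⁻¹)
    (idx : Fin u → Fin n) (hidx : Function.Injective idx)
    (a : Fin u → K) (ha : ∀ j, a j ≠ 0)
    (hdep : ∑ j, a j • ℓ (idx j) = 0)
    (p : MvPolynomial (Fin n) K)
    (hp : p = ∑ j : Fin u, C (a j) * ∏ j' ∈ Finset.univ.erase j, X (idx j')) :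
    p ≠ 0 ∧ p.IsHomogeneous (u - 1) ∧ φ p = 0 := by
  have hu0 : 0 < u := by omega
  set j0 : Fin u := ⟨0, hu0⟩ with hj0
  -- exponent vectors
  set e : Fin u → (Fin n →₀ ℕ) :=
    fun j => ∑ j' ∈ Finset.univ.erase j, Finsupp.single (idx j') 1 with he
  have key : ∀ t : Finset (Fin u), ∏ j' ∈ t, (X (idx j') : MvPolynomial (Fin n) K)
      = monomial (∑ j' ∈ t, Finsupp.single (idx j') 1) (1 : K) := by
    intro t
    induction t using Finset.induction with
    | empty => simp [monomial_zero']
    | @insert a s h ih =>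
        rw [Finset.prod_insert h, Finset.sum_insert h, ih, X, monomial_mul, one_mul]
  have he' : ∀ j : Fin u, (∑ j' ∈ Finset.univ.erase j, Finsupp.single (idx j') 1 : Fin n →₀ ℕ) = e j := fun j => rfl
  have happ : ∀ j j', e j (idx j') = if j' ∈ Finset.univ.erase j then 1 else 0 := by
    intro j j'
    rw [he]
    rw [Finsupp.finset_sum_apply]
    simp_rw [Finsupp.single_apply, hidx.eq_iff]
    simp [Finset.sum_ite_eq]
  have hne : ∀ j : Fin u, j ≠ j0 → e j ≠ e j0 := by
    intro j hj hEq
    have h1 := happ j j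
    have h2 := happ j0 j
    rw [hEq] at h1
    rw [h1] at h2
    simp [hj] at h2
  refine ⟨?_, ?_, ?_⟩
  · -- nonzero: coefficient at e j0 is a 0
    intro hzero
    have : coeff (e j0) p = a j0 := by
      rw [hp, coeff_sum]
      simp_rw [key, coeff_C_mul, coeff_monomial, he']
      rw [Finset.sum_eq_single j0]
      · simp
      · intro j _ hj
        simp [hne j hj]
      · simp
    rw [hzero] at this
    simp at this
    exact ha j0 this.symm
  · -- homogeneous of degree u - 1
    rw [hp]
    apply IsHomogeneous.sum
    intro j _
    have : ((Finset.univ.erase j).card : ℕ) = u - 1 := by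
      rw [Finset.card_erase_of_mem (Finset.mem_univ j), Finset.card_univ, Fintype.card_fin]
    have hprod : (∏ j' ∈ Finset.univ.erase j, (X (idx j') : MvPolynomial (Fin n) K)).IsHomogeneous (u - 1) := by
      rw [← this, Finset.card_eq_sum_ones]
      exact IsHomogeneous.prod _ _ _ (fun j' _ => isHomogeneous_X _ _)
    simpa using ((isHomogeneous_C (Fin n) (a j)).mul hprod)
  · -- in kernel
    set F := FractionRing (MvPolynomial (Fin m) K)
    set L : Fin u → F := fun j => algebraMap (MvPolynomial (Fin m) K) F (ℓ (idx j)) with hL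
    have hLne : ∀ j, L j ≠ j0 := fun j => by
      simpa [hL, hj0] using (map_ne_zero_of_mem_nonZeroDivisors (algebraMap _ F)
        (IsFractionRing.injective _ _) (mem_nonZeroDivisors_of_ne_zero (hℓ0 (idx j))))
    have hP : (∏ j, L j) ≠ 0 := Finset.prod_ne_zero_iff.2 fun j _ => hLne j
    have hterm : ∀ j : Fin u, (∏ j' ∈ Finset.univ.erase j, (L j')⁻¹) = L j / ∏ j', L j' := by
      intro j
      have hE : (∏ j' ∈ Finset.univ.erase j, L j') * L j = ∏ j', L j' :=
        Finset.prod_erase_mul _ _ (Finset.mem_univ j)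
      have hEne : (∏ j' ∈ Finset.univ.erase j, L j') ≠ 0 :=
        Finset.prod_ne_zero_iff.2 fun j' _ => hLne j'
      rw [Finset.prod_inv_distrib, eq_div_iff hP, ← hE, inv_mul_cancel_left₀ hEne]
    rw [hp, map_sum]
    have hCdep : (∑ j, (C (a j) : MvPolynomial (Fin m) K) * ℓ (idx j)) = 0 := by
      simpa [smul_eq_C_mul] using hdep
    have hCC : ∀ c : K, φ (C c) = algebraMap (MvPolynomial (Fin m) K) F (C c) := by
      intro c
      rw [← MvPolynomial.algebraMap_eq, AlgHom.commutes,
        IsScalarTower.algebraMap_apply K (MvPolynomial (Fin m) K) F, MvPolynomial.algebraMap_eq]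
    have hmap : ∑ j, φ (C (a j)) * L j = 0 := by
      simp_rw [hCC, hL, ← map_mul, ← map_sum]
      rw [hCdep, map_zero]
    calc (∑ j, φ (C (a j) * ∏ j' ∈ Finset.univ.erase j, X (idx j')))
        = ∑ j, φ (C (a j)) * (L j / ∏ j', L j') := by
          refine Finset.sum_congr rfl fun j _ => ?_
          rw [map_mul, map_prod]
          simp_rw [hφ]
          rw [hterm j]
      _ = (∑ j, φ (C (a j)) * L j) / ∏ j', L j' := by
          rw [Finset.sum_div]
          simp_rw [mul_div_assoc]
      _ = 0 := by rw [hmap, zero_div]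
end

section
/- Let K be a field, let C ⊆ K^n be a linear code, and let H be a parity-check matrix of C (i.e., C = {x ∈ K^n : Hx = 0}). If J_1 ≠ J_2 are two distinct circuits of the column matroid of H, then there exists a 2-dimensional subspace D ⊆ C with Supp(D) ⊆ J_1 ∪ J_2; in particular, if dim_K C ≥ 2, then the second generalized Hamming weight satisfies d_2(C) ≤ |J_1 ∪ J_2|. -/
lemma circuit_vec {K : Type*} [Field K] {m n : ℕ} (H : Matrix (Fin m) (Fin n) K)
    (J : Finset (Fin n))
    (hdep : ¬ LinearIndependent K (fun i : J => (fun j => H j i.1)))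
    (hmin : ∀ I ⊂ J, LinearIndependent K (fun i : I => (fun j => H j i.1))) :
    ∃ x : Fin n → K, H.mulVec x = 0 ∧ ∀ i, x i ≠ 0 ↔ i ∈ J := by
  rw [Fintype.not_linearIndependent_iff] at hdep
  obtain ⟨g, hsum, i0, hi0⟩ := hdep
  set G : Fin n → K := fun j => if h : j ∈ J then g ⟨j, h⟩ else 0 with hG
  have hGsum : ∑ j ∈ J, G j • (fun k => H k j) = 0 := by
    rw [← hsum]
    rw [← Finset.sum_coe_sort J (fun j => G j • (fun k => H k j))]
    apply Finset.sum_congr rfl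
    intro i _
    simp [hG, i.2]
  -- support exactness
  have hall : ∀ j ∈ J, G j ≠ 0 := by
    intro j0 hj0 hGj0
    have hsub : J.erase j0 ⊂ J := Finset.erase_ssubset hj0
    have hli := hmin _ hsub
    rw [Fintype.linearIndependent_iff] at hli
    have key := hli (fun k => G k.1) ?_
    · have hzero : ∀ j ∈ J, G j = 0 := by
        intro j hj
        by_cases hj' : j = j0
        · rwa [hj']
        · exact key ⟨j, Finset.mem_erase.2 ⟨hj', hj⟩⟩
      exact hi0 (by simpa [hG, i0.2] using hzero i0.1 i0.2)
    · rw [Finset.sum_coe_sort (J.erase j0) (fun j => G j • (fun k => H k j))]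
      rw [Finset.sum_erase J (f := fun j => G j • (fun k => H k j)) (by simp [hGj0])]
      exact hGsum
  refine ⟨G, ?_, ?_⟩
  · funext k
    have := congrFun hGsum k
    simp only [Finset.sum_apply, Pi.smul_apply, Pi.zero_apply, smul_eq_mul] at this
    simp only [Matrix.mulVec, dotProduct, Pi.zero_apply]
    rw [← Finset.sum_subset (Finset.subset_univ J)]
    · rw [← this]; apply Finset.sum_congr rfl; intro j _; ring
    · intro j _ hj; simp [hG, hj]
  · intro i
    constructor
    · intro hi
      by_contra hiJ
      exact hi (by simp [hG, hiJ])
    · intro hi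
      exact hall i hi

/-- If `J₁ ≠ J₂` are distinct circuits of the column matroid of a
parity-check matrix `H` of the code `C`, then there is a 2-dimensional subspace
`D ⊆ C` with `Supp(D) ⊆ J₁ ∪ J₂`; in particular if `dim C ≥ 2` then
`d₂(C) ≤ |J₁ ∪ J₂|`. -/
theorem stmt_6 (K : Type*) [Field K] (m n : ℕ)
    (Co : Submodule K (Fin n → K))
    (H : Matrix (Fin m) (Fin n) K)
    (hH : ∀ x : Fin n → K, x ∈ Co ↔ H.mulVec x = 0)
    (J1 J2 : Finset (Fin n)) (hne : J1 ≠ J2)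
    (hJ1dep : ¬ LinearIndependent K (fun i : J1 => (fun j => H j i.1)))
    (hJ1min : ∀ I ⊂ J1, LinearIndependent K (fun i : I => (fun j => H j i.1)))
    (hJ2dep : ¬ LinearIndependent K (fun i : J2 => (fun j => H j i.1)))
    (hJ2min : ∀ I ⊂ J2, LinearIndependent K (fun i : I => (fun j => H j i.1))) :
    (∃ D : Submodule K (Fin n → K), D ≤ Co ∧ Module.finrank K D = 2 ∧
      {i | ∃ x ∈ D, x i ≠ 0} ⊆ ((J1 ∪ J2 : Finset (Fin n)) : Set (Fin n))) ∧
    (2 ≤ Module.finrank K Co →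
      sInf {r : ℕ | ∃ D : Submodule K (Fin n → K), D ≤ Co ∧ Module.finrank K D = 2 ∧
        {i | ∃ x ∈ D, x i ≠ 0}.ncard = r} ≤ (J1 ∪ J2).card) := by
  obtain ⟨x1, hx1, hs1⟩ := circuit_vec H J1 hJ1dep hJ1min
  obtain ⟨x2, hx2, hs2⟩ := circuit_vec H J2 hJ2dep hJ2min
  -- circuits are nonempty
  have hJ1ne : J1.Nonempty := by
    rcases J1.eq_empty_or_nonempty with h | h
    · exact absurd (by subst h; exact linearIndependent_empty_type) hJ1dep
    · exact h
  have hJ2ne : J2.Nonempty := by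
    rcases J2.eq_empty_or_nonempty with h | h
    · exact absurd (by subst h; exact linearIndependent_empty_type) hJ2dep
    · exact h
  -- x1, x2 linearly independent
  have hli : LinearIndependent K ![x1, x2] := by
    rw [LinearIndependent.pair_iff]
    intro a b hab
    by_contra hcon
    have hab' : ∀ i, a * x1 i + b * x2 i = 0 := fun i => congrFun hab i
    have ha : a ≠ 0 ∨ b ≠ 0 := by tauto
    have key : a ≠ 0 ∧ b ≠ 0 := by
      constructor
      · intro ha0
        rcases ha with h | h
        · exact h ha0
        · obtain ⟨j, hj⟩ := hJ2ne
          have := hab' j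
          rw [ha0, zero_mul, zero_add] at this
          exact (hs2 j).2 hj (by
            rcases mul_eq_zero.1 this with h' | h'
            · exact absurd h' h
            · exact h')
      · intro hb0
        rcases ha with h | h
        · obtain ⟨j, hj⟩ := hJ1ne
          have := hab' j
          rw [hb0, zero_mul, add_zero] at this
          exact (hs1 j).2 hj (by
            rcases mul_eq_zero.1 this with h' | h'
            · exact absurd h' h
            · exact h')
        · exact h hb0
    apply hne
    ext i
    rw [← hs1 i, ← hs2 i]
    constructor
    · intro h1 h2
      have := hab' i
      rw [h2, mul_zero, add_zero] at this
      rcases mul_eq_zero.1 this with h' | h'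
      · exact key.1 h'
      · exact h1 h'
    · intro h2 h1
      have := hab' i
      rw [h1, mul_zero, zero_add] at this
      rcases mul_eq_zero.1 this with h' | h'
      · exact key.2 h'
      · exact h2 h'
  set D : Submodule K (Fin n → K) := Submodule.span K {x1, x2} with hD
  have hDle : D ≤ Co := by
    rw [hD, Submodule.span_le]
    intro y hy
    simp only [Set.mem_insert_iff, Set.mem_singleton_iff] at hy
    rcases hy with rfl | rfl
    · exact (hH _).2 hx1
    · exact (hH _).2 hx2
  have hrank : Module.finrank K D = 2 := by
    have : ({x1, x2} : Set (Fin n → K)) = Set.range ![x1, x2] := by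
      ext y
      simp [Fin.exists_fin_two, eq_comm, or_comm]
    rw [hD, this, finrank_span_eq_card hli]
    simp
  have hsupp : {i | ∃ x ∈ D, x i ≠ 0} ⊆ ((J1 ∪ J2 : Finset (Fin n)) : Set (Fin n)) := by
    intro i hi
    obtain ⟨x, hxD, hxi⟩ := hi
    rw [hD, Submodule.mem_span_pair] at hxD
    obtain ⟨a, b, hab⟩ := hxD
    simp only [Finset.coe_union, Set.mem_union, Finset.mem_coe]
    by_contra hcon
    push_neg at hcon
    have h1 : x1 i = 0 := by
      by_contra h; exact hcon.1 ((hs1 i).1 h)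
    have h2 : x2 i = 0 := by
      by_contra h; exact hcon.2 ((hs2 i).1 h)
    apply hxi
    rw [← hab]
    simp [h1, h2]
  refine ⟨⟨D, hDle, hrank, hsupp⟩, fun _ => ?_⟩
  calc sInf {r : ℕ | ∃ D : Submodule K (Fin n → K), D ≤ Co ∧ Module.finrank K D = 2 ∧
        {i | ∃ x ∈ D, x i ≠ 0}.ncard = r} ≤ {i | ∃ x ∈ D, x i ≠ 0}.ncard :=
      Nat.sInf_le ⟨D, hDle, hrank, rfl⟩
    _ ≤ ((J1 ∪ J2 : Finset (Fin n)) : Set (Fin n)).ncard :=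
      Set.ncard_le_ncard hsupp (Finset.finite_toSet _)
    _ = (J1 ∪ J2).card := Set.ncard_coe_finset _
end

section
/- Let K be a field and let H be an m×n matrix over K. Suppose J ⊆ {1,…,n} has minimum cardinality among all subsets I with |I| − dim_K Span{H_i : i ∈ I} ≥ 2. Then for every i ∈ J: (a) dim_K Span{H_j : j ∈ J∖{i}} = dim_K Span{H_j : j ∈ J}, and (b) the family of columns {H_j}_{j∈J∖{i}} is linearly dependent. -/
/-- If `J` has minimum cardinality among all column sets `I` of `H` with
`|I| − dim Span{Hᵢ : i ∈ I} ≥ 2`, then for every `i ∈ J` the span of the columns indexed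
by `J∖{i}` equals the span of the columns indexed by `J` (in dimension), and the columns
indexed by `J∖{i}` are linearly dependent. -/
theorem stmt_7 (K : Type*) [Field K] (m n : ℕ)
    (H : Matrix (Fin m) (Fin n) K)
    (J : Finset (Fin n))
    (hJ : Module.finrank K
        (Submodule.span K ((fun i => (fun j => H j i)) '' (J : Set (Fin n)))) + 2 ≤ J.card)
    (hmin : ∀ I : Finset (Fin n),
      Module.finrank K
        (Submodule.span K ((fun i => (fun j => H j i)) '' (I : Set (Fin n)))) + 2 ≤ I.card →
      J.card ≤ I.card) :
    ∀ i ∈ J,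
      (Module.finrank K
          (Submodule.span K ((fun i0 => (fun j => H j i0)) '' ((J.erase i : Finset (Fin n)) : Set (Fin n)))) =
        Module.finrank K
          (Submodule.span K ((fun i0 => (fun j => H j i0)) '' (J : Set (Fin n))))) ∧
      ¬ LinearIndependent K (fun i0 : (J.erase i) => (fun j => H j i0.1)) := by
  intro i hi
  set f : Fin n → (Fin m → K) := fun i => fun j => H j i with hf
  have hcard : (J.erase i).card = J.card - 1 := Finset.card_erase_of_mem hi
  have hJpos : 1 ≤ J.card := Finset.one_le_card.mpr ⟨i, hi⟩
  -- rank of erased set is at least J.card - 2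
  have hge : J.card - 2 ≤ Module.finrank K (Submodule.span K (f '' ((J.erase i : Finset (Fin n)) : Set (Fin n)))) := by
    by_contra hlt
    push_neg at hlt
    have h2 : Module.finrank K (Submodule.span K (f '' ((J.erase i : Finset (Fin n)) : Set (Fin n)))) + 2 ≤ (J.erase i).card := by
      omega
    have := hmin (J.erase i) h2
    omega
  -- rank is monotone
  have hmono : Module.finrank K (Submodule.span K (f '' ((J.erase i : Finset (Fin n)) : Set (Fin n)))) ≤
      Module.finrank K (Submodule.span K (f '' (J : Set (Fin n)))) := by
    apply Submodule.finrank_mono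
    exact Submodule.span_mono (Set.image_mono (by exact_mod_cast Finset.erase_subset i J))
  have heq : Module.finrank K (Submodule.span K (f '' ((J.erase i : Finset (Fin n)) : Set (Fin n)))) =
      Module.finrank K (Submodule.span K (f '' (J : Set (Fin n)))) := by omega
  refine ⟨heq, ?_⟩
  intro hli
  have hrange : Set.range (fun i0 : (J.erase i) => f i0.1) = f '' ((J.erase i : Finset (Fin n)) : Set (Fin n)) := by
    rw [Set.image_eq_range]; rfl
  have := finrank_span_eq_card hli
  rw [hrange] at this
  rw [Fintype.card_coe] at this
  omega
end

section
/- Let K be a field and let U ⊆ {1,…,n} be a finite index set. For a vector c ∈ K^n and a set J with supp(c) ⊆ J ⊆ U, define ∂_J(c) := Σ_{j∈J} c_j Π_{i∈J∖{j}} y_i ∈ K[y_1,…,y_n]. If c^1, c^2 ∈ K^n have supports J_1, J_2 ⊆ U, and c^3 := c^1 − c^2 has support J_3, then (Π_{i∈U∖J_3} y_i)·∂_{J_3}(c^3) = (Π_{i∈U∖J_1} y_i)·∂_{J_1}(c^1) − (Π_{i∈U∖J_2} y_i)·∂_{J_2}(c^2). In particular, this gives a polynomial relation (syzygy) among ∂_{J_1}(c^1),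 ∂_{J_2}(c^2), ∂_{J_3}(c^3) with monomial coefficients. -/
open MvPolynomial

lemma expand_aux (K : Type*) [Field K] (n : ℕ) (U J : Finset (Fin n))
    (c : Fin n → K) (h : ∀ i, c i ≠ 0 ↔ i ∈ J) (hU : J ⊆ U) :
    (∏ i ∈ U \ J, (X i : MvPolynomial (Fin n) K)) *
      (∑ j ∈ J, C (c j) * ∏ i ∈ J.erase j, X i) =
    ∑ j ∈ U, C (c j) * ∏ i ∈ U.erase j, X i := by
  rw [Finset.mul_sum]
  rw [← Finset.sum_subset hU (by
    intro x _ hx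
    have : c x = 0 := by by_contra h'; exact hx ((h x).mp h')
    simp [this])]
  refine Finset.sum_congr rfl fun j hj => ?_
  rw [mul_left_comm]
  congr 1
  rw [← Finset.prod_union (Finset.sdiff_disjoint.mono_right (Finset.erase_subset _ _))]
  congr 1
  ext x
  simp only [Finset.mem_union, Finset.mem_sdiff, Finset.mem_erase]
  constructor
  · rintro (⟨hx, hxJ⟩ | ⟨hx, hxJ⟩)
    · exact ⟨fun h' => hxJ (h' ▸ hj), hx⟩
    · exact ⟨hx, hU hxJ⟩
  · rintro ⟨hne, hxU⟩
    by_cases hxJ : x ∈ J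
    · exact Or.inr ⟨hne, hxJ⟩
    · exact Or.inl ⟨hxU, hxJ⟩

/-- For `c ∈ Kⁿ` with `supp(c) ⊆ J ⊆ U`, let
`∂_J(c) = Σ_{j∈J} cⱼ Π_{i∈J∖{j}} yᵢ`. If `c¹, c²` have supports `J₁, J₂ ⊆ U` and
`c³ = c¹ − c²` has support `J₃`, then
`(Π_{U∖J₃} yᵢ)·∂_{J₃}(c³) = (Π_{U∖J₁} yᵢ)·∂_{J₁}(c¹) − (Π_{U∖J₂} yᵢ)·∂_{J₂}(c²)`. -/
theorem stmt_9 (K : Type*) [Field K] (n : ℕ)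
    (U J1 J2 J3 : Finset (Fin n))
    (c1 c2 : Fin n → K)
    (h1 : ∀ i, c1 i ≠ 0 ↔ i ∈ J1)
    (h2 : ∀ i, c2 i ≠ 0 ↔ i ∈ J2)
    (hU1 : J1 ⊆ U) (hU2 : J2 ⊆ U)
    (h3 : ∀ i, (c1 - c2) i ≠ 0 ↔ i ∈ J3) :
    (∏ i ∈ U \ J3, (X i : MvPolynomial (Fin n) K)) *
        (∑ j ∈ J3, C ((c1 - c2) j) * ∏ i ∈ J3.erase j, X i) =
      (∏ i ∈ U \ J1, (X i : MvPolynomial (Fin n) K)) *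
          (∑ j ∈ J1, C (c1 j) * ∏ i ∈ J1.erase j, X i) -
        (∏ i ∈ U \ J2, (X i : MvPolynomial (Fin n) K)) *
          (∑ j ∈ J2, C (c2 j) * ∏ i ∈ J2.erase j, X i) := by
  have hU3 : J3 ⊆ U := by
    intro i hi
    have := (h3 i).mpr hi
    by_contra hx
    by_cases hc1 : c1 i = 0
    · by_cases hc2 : c2 i = 0
      · simp [Pi.sub_apply, hc1, hc2] at this
      · exact hx (hU2 ((h2 i).mp hc2))
    · exact hx (hU1 ((h1 i).mp hc1))
  rw [expand_aux K n U J1 c1 h1 hU1, expand_aux K n U J2 c2 h2 hU2,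
    expand_aux K n U J3 _ h3 hU3, ← Finset.sum_sub_distrib]
  refine Finset.sum_congr rfl fun j _ => ?_
  simp [sub_mul, map_sub]
end

section
/- Let K be a field, let C ⊆ K^n be a linear code with minimum distance d(C) ≥ 2, and let H be a parity-check matrix of C (i.e., C = {x ∈ K^n : Hx = 0}) with dual linear forms ℓ_1,…,ℓ_n. Suppose E_1,…,E_s (s ≥ 2) are pairwise distinct circuits of the column matroid of H, with dependencies D_i = Σ_{j∈E_i} a^{(i)}_j y_j where all a^{(i)}_j ≠ 0 and Σ_{j∈E_i} a^{(i)}_j ℓ_j = 0, and suppose P_1,…,P_s ∈ K[y_1,…,y_n] are nonzero homogeneous polynomials with P_1∂(D_1)+⋯+P_s∂(D_s) = 0 and deg(P_i) + |E_i| − 1 = t for all i. Then there exists a 2-dimensional subspace D ⊆ C with |Supp(D)| ≤ t + 2; in particular the second generalized Hamming weight satisfies d_2(C) ≤ t + 2. -/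
open MvPolynomial

private lemma prod_X_eq_monomial {K : Type*} [Field K] {n : ℕ} (S : Finset (Fin n)) :
    (∏ r ∈ S, X r : MvPolynomial (Fin n) K)
      = monomial (∑ r ∈ S, Finsupp.single r 1) 1 := by
  classical
  induction S using Finset.induction_on with
  | empty => simp
  | insert _ _ h ih =>
    rw [Finset.prod_insert h, Finset.sum_insert h, ih, X, monomial_mul, mul_one]

private lemma sum_single_apply {n : ℕ} (S : Finset (Fin n)) (r0 : Fin n) :
    (∑ r ∈ S, Finsupp.single r (1 : ℕ)) r0 = if r0 ∈ S then 1 else 0 := by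
  classical
  rw [Finset.sum_apply']
  simp [Finsupp.single_apply, Finset.sum_ite_eq']

/-- Let `C` be a linear code with `d(C) ≥ 2` and parity-check matrix
`H` with dual linear forms `ℓᵢ`. If `E₁,…,E_s` (`s ≥ 2`) are pairwise distinct circuits
of the column matroid of `H`, with dependencies `Dᵢ = Σ_{j∈Eᵢ} aᵢⱼ yⱼ` (all `aᵢⱼ ≠ 0`,
`Σ_{j∈Eᵢ} aᵢⱼ ℓⱼ = 0`), and `P₁,…,P_s` are nonzero homogeneous polynomials with
`Σ Pᵢ ∂(Dᵢ) = 0` and `deg Pᵢ + |Eᵢ| − 1 = t` for all `i`, then there is a 2-dimensional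
subspace `D ⊆ C` with `|Supp(D)| ≤ t + 2`; in particular `d₂(C) ≤ t + 2`. -/
theorem stmt_11 (K : Type*) [Field K] (m n s : ℕ) (hs : 2 ≤ s)
    (Co : Submodule K (Fin n → K))
    (H : Matrix (Fin m) (Fin n) K)
    (hH : ∀ x : Fin n → K, x ∈ Co ↔ H.mulVec x = 0)
    (hd : ∀ c ∈ Co, c ≠ (0 : Fin n → K) → 2 ≤ {i | c i ≠ 0}.ncard)
    (ℓ : Fin n → MvPolynomial (Fin m) K)
    (hℓ : ∀ i, ℓ i = ∑ j, H j i • X j)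
    (E : Fin s → Finset (Fin n)) (hEinj : Function.Injective E)
    (hEdep : ∀ i, ¬ LinearIndependent K (fun j : E i => (fun r => H r j.1)))
    (hEmin : ∀ i, ∀ I ⊂ E i, LinearIndependent K (fun j : I => (fun r => H r j.1)))
    (a : Fin s → Fin n → K)
    (ha : ∀ i, ∀ j ∈ E i, a i j ≠ 0)
    (hdep : ∀ i, ∑ j ∈ E i, a i j • ℓ j = 0)
    (P : Fin s → MvPolynomial (Fin n) K) (hP : ∀ i, P i ≠ 0)
    (t : ℕ)
    (hPdeg : ∀ i, ∃ e, (P i).IsHomogeneous e ∧ e + (E i).card = t + 1)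
    (hsyz : ∑ i, P i * (∑ j ∈ E i, C (a i j) * ∏ r ∈ (E i).erase j, X r) = 0) :
    (∃ D : Submodule K (Fin n → K), D ≤ Co ∧ Module.finrank K D = 2 ∧
      {i | ∃ x ∈ D, x i ≠ 0}.ncard ≤ t + 2) ∧
    sInf {r : ℕ | ∃ D : Submodule K (Fin n → K), D ≤ Co ∧ Module.finrank K D = 2 ∧
      {i | ∃ x ∈ D, x i ≠ 0}.ncard = r} ≤ t + 2 := by
  classical
  -- boundary polynomials
  set B : Fin s → MvPolynomial (Fin n) K :=
    fun i => ∑ j ∈ E i, C (a i j) * ∏ r ∈ (E i).erase j, X r with hBdef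
  have hsyzB : ∑ i, P i * B i = 0 := hsyz
  have hBdef' : ∀ i, B i = ∑ j ∈ E i, C (a i j) * ∏ r ∈ (E i).erase j, X r :=
    fun i => rfl
  -- each circuit is nonempty
  have hEne : ∀ i, (E i).Nonempty := by
    intro i
    rcases Finset.eq_empty_or_nonempty (E i) with h | h
    · exfalso
      apply hEdep i
      haveI : IsEmpty {x // x ∈ E i} := Finset.isEmpty_coe_sort.2 h
      exact linearIndependent_empty_type
    · exact h
  -- key coefficient identity from the dependencies
  have key : ∀ i (r : Fin m), ∑ j ∈ E i, a i j * H r j = 0 := by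
    intro i r
    have h0 := congrArg (coeff (Finsupp.single r (1 : ℕ))) (hdep i)
    simp only [coeff_sum, hℓ, coeff_smul, smul_eq_mul, coeff_zero, coeff_X'] at h0
    rw [← h0]
    refine Finset.sum_congr rfl fun j hj => ?_
    congr 1
    have hcond : ∀ x : Fin m,
        (if (Finsupp.single x (1 : ℕ)) = Finsupp.single r 1 then (1 : K) else 0)
          = if x = r then 1 else 0 := by
      intro x
      simp [Finsupp.single_eq_single_iff]
    simp only [hcond, mul_ite, mul_one, mul_zero]
    rw [Finset.sum_ite_eq' Finset.univ r (fun x => H x j), if_pos (Finset.mem_univ r)]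
  -- codewords supported on the circuits
  set c : Fin s → (Fin n → K) := fun i j => if j ∈ E i then a i j else 0 with hcdef
  have hcC : ∀ i, c i ∈ Co := by
    intro i
    rw [hH]
    funext r
    show ∑ j, H r j * c i j = 0
    calc ∑ j, H r j * c i j
        = ∑ j, if j ∈ E i then a i j * H r j else 0 := by
          refine Finset.sum_congr rfl fun j _ => ?_
          by_cases h : j ∈ E i <;> simp [hcdef, h, mul_comm]
      _ = ∑ j ∈ E i, a i j * H r j := by
          rw [Finset.sum_ite_mem, Finset.univ_inter]
      _ = 0 := key i r
  -- homogeneity of the boundaries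
  have hBhom : ∀ i, (B i).IsHomogeneous ((E i).card - 1) := by
    intro i
    rw [hBdef']
    apply IsHomogeneous.sum
    intro j hj
    have h1 := IsHomogeneous.prod ((E i).erase j) (fun r => (X r : MvPolynomial (Fin n) K))
      (fun _ => 1) (fun r _ => isHomogeneous_X K r)
    have h2 : ∑ _r ∈ (E i).erase j, 1 = (E i).card - 1 := by
      rw [Finset.sum_const, smul_eq_mul, mul_one, Finset.card_erase_of_mem hj]
    rw [h2] at h1
    exact h1.C_mul _
  -- boundaries are nonzero
  have hBne : ∀ i, B i ≠ 0 := by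
    intro i h0
    obtain ⟨j0, hj0⟩ := hEne i
    have hco : coeff (∑ r ∈ (E i).erase j0, Finsupp.single r 1) (B i) = a i j0 := by
      rw [hBdef', coeff_sum, Finset.sum_eq_single j0]
      · rw [prod_X_eq_monomial, C_mul_monomial, mul_one, coeff_monomial, if_pos rfl]
      · intro j hj hjne
        rw [prod_X_eq_monomial, C_mul_monomial, mul_one, coeff_monomial, if_neg]
        intro heq
        have h1 := congrArg (fun f => f j0) heq
        simp only [sum_single_apply] at h1
        rw [if_pos (Finset.mem_erase.2 ⟨fun h => hjne h.symm, hj0⟩),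
          if_neg (Finset.notMem_erase j0 _)] at h1
        exact one_ne_zero h1
      · intro h; exact absurd hj0 h
    rw [h0, coeff_zero] at hco
    exact ha i j0 hj0 hco.symm
  -- divisibility of monomials appearing in P i * B i
  have hdiv : ∀ i (M : Fin n →₀ ℕ), coeff M (P i * B i) ≠ 0 →
      ∃ j ∈ E i, ∀ r ∈ (E i).erase j, M r ≠ 0 := by
    intro i M hM0
    have hre : coeff M (P i * B i) = ∑ j ∈ E i,
        coeff M ((C (a i j) * P i) *
          monomial (∑ r ∈ (E i).erase j, Finsupp.single r 1) 1) := by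
      rw [hBdef', Finset.mul_sum, coeff_sum]
      refine Finset.sum_congr rfl fun j hj => ?_
      rw [prod_X_eq_monomial, mul_left_comm, ← mul_assoc]
    rw [hre] at hM0
    obtain ⟨j, hj, hne0⟩ := Finset.exists_ne_zero_of_sum_ne_zero hM0
    rw [coeff_mul_monomial'] at hne0
    have hle : (∑ r ∈ (E i).erase j, Finsupp.single r (1 : ℕ)) ≤ M := by
      by_contra h
      simp [h] at hne0
    refine ⟨j, hj, fun r hr => ?_⟩
    have h1 : (∑ r' ∈ (E i).erase j, Finsupp.single r' (1 : ℕ)) r = 1 := by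
      rw [sum_single_apply, if_pos hr]
    have h2 := (Finsupp.le_iff _ _).1 hle r (Finsupp.mem_support_iff.2 (by rw [h1]; exact one_ne_zero))
    rw [h1] at h2
    omega
  -- choose the first index and a monomial
  have h0s : 0 < s := by omega
  set i1 : Fin s := ⟨0, h0s⟩ with hi1def
  have hM1 : P i1 * B i1 ≠ 0 := mul_ne_zero (hP i1) (hBne i1)
  obtain ⟨M, hM⟩ := MvPolynomial.ne_zero_iff.1 hM1
  -- degree of M
  obtain ⟨e, he, hecard⟩ := hPdeg i1
  have hcard1 : 1 ≤ (E i1).card := Finset.card_pos.2 (hEne i1)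
  have hMdeg : M.degree = t := by
    have hhom := he.mul (hBhom i1)
    have := hhom hM
    rw [Pi.one_def, ← Finsupp.degree_eq_weight_one] at this
    omega
  have hMsupp : M.support.card ≤ t := by
    have h1 : M.support.card ≤ M.degree := by
      rw [Finsupp.degree, Finset.card_eq_sum_ones]
      exact Finset.sum_le_sum fun i hi =>
        Nat.one_le_iff_ne_zero.2 (Finsupp.mem_support_iff.1 hi)
    omega
  -- find a second index
  have hsum0 : ∑ i, coeff M (P i * B i) = 0 := by
    rw [← coeff_sum, hsyzB, coeff_zero]
  obtain ⟨i2, hi2ne, hi2⟩ : ∃ i2, i2 ≠ i1 ∧ coeff M (P i2 * B i2) ≠ 0 := by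
    by_contra hcon
    push_neg at hcon
    rw [Finset.sum_eq_single i1 (fun b _ hb => hcon b hb) (by simp)] at hsum0
    exact hM hsum0
  obtain ⟨j1, hj1, hd1⟩ := hdiv i1 M hM
  obtain ⟨j2, hj2, hd2⟩ := hdiv i2 M hi2
  -- union bound
  have hsub : E i1 ∪ E i2 ⊆ M.support ∪ {j1, j2} := by
    intro k hk
    rcases Finset.mem_union.1 hk with hk1 | hk2
    · by_cases h : k = j1
      · exact Finset.mem_union_right _ (by simp [h])
      · exact Finset.mem_union_left _
          (Finsupp.mem_support_iff.2 (hd1 k (Finset.mem_erase.2 ⟨h, hk1⟩)))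
    · by_cases h : k = j2
      · exact Finset.mem_union_right _ (by simp [h])
      · exact Finset.mem_union_left _
          (Finsupp.mem_support_iff.2 (hd2 k (Finset.mem_erase.2 ⟨h, hk2⟩)))
  have hcard : (E i1 ∪ E i2).card ≤ t + 2 := by
    have h1 := Finset.card_le_card hsub
    have h2 := Finset.card_union_le M.support ({j1, j2} : Finset (Fin n))
    have h3 : ({j1, j2} : Finset (Fin n)).card ≤ 2 := by
      have := Finset.card_insert_le j1 ({j2} : Finset (Fin n))
      simpa using this
    omega
  -- circuits don't contain each other
  have hnotsub : ∀ i i' : Fin s, i ≠ i' → ¬ E i ⊆ E i' := by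
    intro i i' hne hsubEE
    have hss : E i ⊂ E i' := ⟨hsubEE, fun h => hne (hEinj (le_antisymm hsubEE h))⟩
    exact hEdep i (hEmin i' _ hss)
  obtain ⟨k1, hk1E, hk1nE⟩ := Finset.not_subset.1 (hnotsub i1 i2 (Ne.symm hi2ne))
  obtain ⟨k2, hk2E, hk2nE⟩ := Finset.not_subset.1 (hnotsub i2 i1 hi2ne)
  -- linear independence
  have hli : LinearIndependent K ![c i1, c i2] := by
    rw [LinearIndependent.pair_iff]
    intro p q hpq
    have e1 := congrFun hpq k1
    have e2 := congrFun hpq k2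
    simp only [hcdef, Pi.add_apply, Pi.smul_apply, smul_eq_mul, Pi.zero_apply,
      if_pos hk1E, if_neg hk1nE, if_pos hk2E, if_neg hk2nE, mul_zero, add_zero,
      zero_add] at e1 e2
    constructor
    · exact (mul_eq_zero.1 e1).resolve_right (ha i1 k1 hk1E)
    · exact (mul_eq_zero.1 e2).resolve_right (ha i2 k2 hk2E)
  set D : Submodule K (Fin n → K) := Submodule.span K (Set.range ![c i1, c i2]) with hDdef
  have hD1 : D ≤ Co := by
    rw [hDdef, Submodule.span_le]
    rintro z ⟨k, rfl⟩
    fin_cases k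
    · exact hcC i1
    · exact hcC i2
  have hD2 : Module.finrank K D = 2 := by
    rw [hDdef, finrank_span_eq_card hli, Fintype.card_fin]
  have hD3 : {k | ∃ x ∈ D, x k ≠ 0} ⊆ ↑(E i1 ∪ E i2) := by
    intro k hk
    obtain ⟨x, hxD, hxk⟩ := hk
    obtain ⟨f, hf⟩ := (Submodule.mem_span_range_iff_exists_fun K).1 hxD
    by_contra hkE
    apply hxk
    rw [← hf]
    simp only [Finset.coe_union, Set.mem_union, Finset.mem_coe, not_or] at hkE
    simp [Fin.sum_univ_two, hcdef, hkE.1, hkE.2]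
  have hD3' : {k | ∃ x ∈ D, x k ≠ 0}.ncard ≤ t + 2 := by
    have h1 : {k | ∃ x ∈ D, x k ≠ 0}.ncard ≤ (E i1 ∪ E i2).card := by
      rw [← Set.ncard_coe_finset]
      exact Set.ncard_le_ncard hD3 (E i1 ∪ E i2).finite_toSet
    exact h1.trans hcard
  exact ⟨⟨D, hD1, hD2, hD3'⟩, le_trans (Nat.sInf_le ⟨D, hD1, hD2, rfl⟩) hD3'⟩
end

section
/- Let K be a field, let C ⊆ K^n be a linear code with dim_K C ≥ 2 and minimum distance d(C) ≥ 2, and let H be a parity-check matrix of C (i.e., C = {x ∈ K^n : Hx = 0}) with dual linear forms ℓ_1,…,ℓ_n. Then there exist an integer t ≤ d_2(C) − 1, pairwise distinct dependent sets E_1,…,E_s of the column matroid of H with dependencies D_i = Σ_{j∈E_i} a^{(i)}_j y_j (all a^{(i)}_j ≠ 0 for j ∈ E_i and Σ_{j∈E_i} a^{(i)}_j ℓ_j = 0), and homogeneous polynomials P_1,…,P_s ∈ K[y_1,…,y_n], not all zero, such that P_1∂(D_1)+⋯+P_s∂(D_s) = 0 and deg(P_i) + |E_i| − 1 = t for every i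 with P_i ≠ 0. In other words, the elements ∂(D) of the Orlik–Terao ideal admit a nonzero homogeneous syzygy of degree at most d_2(C) − 1. -/
open MvPolynomial

private lemma prodX_homog {K : Type*} [Field K] {n : ℕ} (T : Finset (Fin n)) :
    (∏ r ∈ T, (X r : MvPolynomial (Fin n) K)).IsHomogeneous T.card := by
  have := MvPolynomial.IsHomogeneous.prod T (fun r => (X r : MvPolynomial (Fin n) K))
    (fun _ => 1) (fun i _ => isHomogeneous_X K i)
  simpa using this

private lemma prodX_ne_zero {K : Type*} [Field K] {n : ℕ} (T : Finset (Fin n)) :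
    (∏ r ∈ T, (X r : MvPolynomial (Fin n) K)) ≠ 0 := by
  rw [Finset.prod_ne_zero_iff]
  exact fun i _ => X_ne_zero i

private lemma key_identity {K : Type*} [Field K] {n : ℕ} (S' E : Finset (Fin n))
    (hE : E ⊆ S') (c : Fin n → K) (hc : ∀ j ∈ S', j ∉ E → c j = 0) :
    (∏ r ∈ S' \ E, (X r : MvPolynomial (Fin n) K)) *
      (∑ j ∈ E, C (c j) * ∏ r ∈ E.erase j, X r)
    = ∑ j ∈ S', C (c j) * ∏ r ∈ S'.erase j, X r := by
  rw [Finset.mul_sum, ← Finset.sum_subset hE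
    (by intro j hj hjE; rw [hc j hj hjE]; simp)]
  refine Finset.sum_congr rfl fun j hj => ?_
  have hjS := hE hj
  rw [← mul_assoc, mul_comm (∏ r ∈ S' \ E, (X r : MvPolynomial (Fin n) K)) (C (c j)),
    mul_assoc, ← Finset.prod_union (Finset.sdiff_disjoint.mono_right (Finset.erase_subset j E))]
  have hset : S' \ E ∪ E.erase j = S'.erase j := by
    ext x
    have hES : x ∈ E → x ∈ S' := fun hx => hE hx
    simp only [Finset.mem_union, Finset.mem_sdiff, Finset.mem_erase]
    constructor
    · rintro (⟨hxS, hxE⟩ | ⟨hxj, hxE⟩)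
      · exact ⟨fun h => hxE (h ▸ hj), hxS⟩
      · exact ⟨hxj, hES hxE⟩
    · rintro ⟨hxj, hxS⟩
      by_cases hx : x ∈ E
      · exact Or.inr ⟨hxj, hx⟩
      · exact Or.inl ⟨hxS, hx⟩
  rw [hset]

private lemma dep_sum {K : Type*} [Field K] {m n : ℕ} (H : Matrix (Fin m) (Fin n) K)
    (ℓ : Fin n → MvPolynomial (Fin m) K) (hℓ : ∀ i, ℓ i = ∑ j, H j i • X j)
    (c : Fin n → K) (hc : H.mulVec c = 0) :
    ∑ j, c j • ℓ j = 0 := by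
  simp only [hℓ, Finset.smul_sum, smul_smul]
  rw [Finset.sum_comm]
  refine Finset.sum_eq_zero fun r _ => ?_
  rw [← Finset.sum_smul]
  convert zero_smul K (X r : MvPolynomial (Fin m) K)
  have := congrFun hc r
  simpa [Matrix.mulVec, dotProduct, mul_comm] using this

set_option maxHeartbeats 1000000 in
/-- Let `C` be a linear code with `dim C ≥ 2` and `d(C) ≥ 2`, with
parity-check matrix `H` and dual linear forms `ℓᵢ`. Then there exist `t ≤ d₂(C) − 1`,
pairwise distinct dependent sets `E₁,…,E_s` with full-support dependencies
`Dᵢ = Σ_{j∈Eᵢ} aᵢⱼ yⱼ`, and homogeneous polynomials `P₁,…,P_s`, not all zero, such that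
`Σ Pᵢ ∂(Dᵢ) = 0` and `deg Pᵢ + |Eᵢ| − 1 = t` for every `i` with `Pᵢ ≠ 0`. -/
theorem stmt_12 (K : Type*) [Field K] (m n : ℕ)
    (Co : Submodule K (Fin n → K))
    (hdim : 2 ≤ Module.finrank K Co)
    (H : Matrix (Fin m) (Fin n) K)
    (hH : ∀ x : Fin n → K, x ∈ Co ↔ H.mulVec x = 0)
    (hd : ∀ c ∈ Co, c ≠ (0 : Fin n → K) → 2 ≤ {i | c i ≠ 0}.ncard)
    (ℓ : Fin n → MvPolynomial (Fin m) K)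
    (hℓ : ∀ i, ℓ i = ∑ j, H j i • X j) :
    ∃ (t s : ℕ) (E : Fin s → Finset (Fin n)) (a : Fin s → Fin n → K)
      (P : Fin s → MvPolynomial (Fin n) K),
      t + 1 ≤ sInf {r : ℕ | ∃ D : Submodule K (Fin n → K), D ≤ Co ∧
          Module.finrank K D = 2 ∧ {i | ∃ x ∈ D, x i ≠ 0}.ncard = r} ∧
      Function.Injective E ∧
      (∀ i, ¬ LinearIndependent K (fun j : E i => (fun r => H r j.1))) ∧
      (∀ i, ∀ j ∈ E i, a i j ≠ 0) ∧
      (∀ i, ∑ j ∈ E i, a i j • ℓ j = 0) ∧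
      (∃ i, P i ≠ 0) ∧
      (∀ i, P i ≠ 0 → ∃ e, (P i).IsHomogeneous e ∧ e + (E i).card = t + 1) ∧
      ∑ i, P i * (∑ j ∈ E i, C (a i j) * ∏ r ∈ (E i).erase j, X r) = 0 := by
  classical
  set Sr : Set ℕ := {r : ℕ | ∃ D : Submodule K (Fin n → K), D ≤ Co ∧
      Module.finrank K D = 2 ∧ {i | ∃ x ∈ D, x i ≠ 0}.ncard = r} with hSr
  -- the set is nonempty
  have hne : Sr.Nonempty := by
    obtain ⟨f, hf⟩ := exists_linearIndependent_of_le_finrank hdim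
    have hg : LinearIndependent K (fun i => (f i : Fin n → K)) := by
      exact hf.map' Co.subtype (Submodule.ker_subtype Co)
    refine ⟨_, Submodule.span K (Set.range fun i => (f i : Fin n → K)), ?_, ?_, rfl⟩
    · rw [Submodule.span_le]
      rintro _ ⟨i, rfl⟩
      exact (f i).2
    · rw [finrank_span_eq_card hg]
      simp
  obtain ⟨D, hDCo, hD2, hSupp⟩ := Nat.sInf_mem hne
  -- pick i in the support
  have hDne : ∃ x : D, (x : Fin n → K) ≠ 0 := by
    by_contra h
    push_neg at h
    have hsub : Subsingleton D := ⟨fun x y => Subtype.ext (by rw [h x, h y])⟩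
    have hz : Module.finrank K D = 0 := Module.finrank_zero_of_subsingleton
    exact absurd (hz.symm.trans hD2) (by norm_num)
  obtain ⟨x₀, hx₀⟩ := hDne
  have hx₀' : ∃ i, (x₀ : Fin n → K) i ≠ 0 := by
    by_contra h; push_neg at h; exact hx₀ (funext h)
  obtain ⟨i, hi⟩ := hx₀'
  -- u ∈ D with u i ≠ 0
  set u : Fin n → K := (x₀ : Fin n → K) with hu_def
  have huD : u ∈ D := x₀.2
  have hui : u i ≠ 0 := hi
  -- v ∈ D, v ≠ 0, v i = 0
  have hv : ∃ v : Fin n → K, v ∈ D ∧ v ≠ 0 ∧ v i = 0 := by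
    by_contra h
    push_neg at h
    have hinj : Function.Injective ((LinearMap.proj i : (Fin n → K) →ₗ[K] K) ∘ₗ D.subtype) := by
      rw [← LinearMap.ker_eq_bot, LinearMap.ker_eq_bot']
      intro v hv0
      by_contra hvne
      have h1 : (v : Fin n → K) ≠ 0 := fun hc => hvne (Subtype.ext hc)
      exact h (v : Fin n → K) v.2 h1 hv0
    have hle := LinearMap.finrank_le_finrank_of_injective hinj
    rw [hD2, Module.finrank_self] at hle
    exact absurd hle (by norm_num)
  obtain ⟨v, hvD, hvne, hvi⟩ := hv
  obtain ⟨j, hvj⟩ : ∃ j, v j ≠ 0 := by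
    by_contra h; push_neg at h; exact hvne (funext h)
  -- scale v
  set α : K := if u j = 0 then 1 else -(u j) / (v j) with hα_def
  have hα : α ≠ 0 := by
    by_cases h : u j = 0
    · simp [hα_def, h]
    · rw [hα_def, if_neg h]
      exact div_ne_zero (neg_ne_zero.mpr h) hvj
  set v' : Fin n → K := α • v with hv'_def
  have hv'D : v' ∈ D := D.smul_mem α hvD
  have hv'i : v' i = 0 := by simp [hv'_def, hvi]
  set w : Fin n → K := u + v' with hw_def
  have hwD : w ∈ D := D.add_mem huD hv'D
  have hwi : w i ≠ 0 := by simpa [hw_def, hv'i] using hui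
  -- the three codewords
  set c : Fin 3 → Fin n → K := ![u, v', w] with hc_def
  have hcD : ∀ k, c k ∈ D := by
    intro k
    fin_cases k <;> simp [hc_def] <;> assumption
  have hcCo : ∀ k, c k ∈ Co := fun k => hDCo (hcD k)
  have hc0 : ∀ k, c k ≠ 0 := by
    intro k
    fin_cases k
    · simpa [hc_def] using fun h => hui (congrFun h i)
    · simpa [hc_def] using fun h : v' = 0 => hvne (by
        funext r
        have := congrFun h r
        simp only [hv'_def, Pi.smul_apply, smul_eq_mul] at this
        exact (mul_eq_zero.mp this).resolve_left hα)
    · simpa [hc_def] using fun h => hwi (congrFun h i)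
  -- supports
  set E : Fin 3 → Finset (Fin n) := fun k => Finset.univ.filter (fun r => c k r ≠ 0) with hE_def
  set S' : Finset (Fin n) := Finset.univ.filter (fun r => ∃ x ∈ D, x r ≠ 0) with hS'_def
  have hmemE : ∀ k r, r ∈ E k ↔ c k r ≠ 0 := by
    intro k r; simp [hE_def]
  have hES' : ∀ k, E k ⊆ S' := by
    intro k r hr
    rw [hmemE] at hr
    simp only [hS'_def, Finset.mem_filter, Finset.mem_univ, true_and]
    exact ⟨c k, hcD k, hr⟩
  have hiS' : i ∈ S' := by
    simp only [hS'_def, Finset.mem_filter, Finset.mem_univ, true_and]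
    exact ⟨u, huD, hui⟩
  have hS'card : S'.card = Set.ncard {r | ∃ x ∈ D, x r ≠ 0} := by
    rw [show {r | ∃ x ∈ D, x r ≠ 0} = (S' : Set (Fin n)) by
      ext r; simp [hS'_def]]
    rw [Set.ncard_coe_finset]
  have hS'pos : 1 ≤ S'.card := Finset.card_pos.mpr ⟨i, hiS'⟩
  -- distinctness of supports
  have hiE0 : i ∈ E 0 := (hmemE 0 i).mpr (by simpa [hc_def] using hui)
  have hiE1 : i ∉ E 1 := by
    rw [hmemE]; simpa [hc_def] using hv'i
  have hiE2 : i ∈ E 2 := (hmemE 2 i).mpr (by simpa [hc_def] using hwi)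
  have hE02 : E 0 ≠ E 2 := by
    intro h
    by_cases huj : u j = 0
    · have hj0 : j ∉ E 0 := by rw [hmemE]; simpa [hc_def] using huj
      have hj2 : j ∈ E 2 := by
        rw [hmemE]
        have : w j = α * v j := by simp [hw_def, hv'_def, huj]
        simpa [hc_def, this] using mul_ne_zero hα hvj
      exact hj0 (h ▸ hj2)
    · have hj0 : j ∈ E 0 := by rw [hmemE]; simpa [hc_def] using huj
      have hj2 : j ∉ E 2 := by
        rw [hmemE]
        have hαv : α * v j = -(u j) := by
          rw [hα_def, if_neg huj]
          exact div_mul_cancel₀ _ hvj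
        have : w j = 0 := by
          simp only [hw_def, Pi.add_apply, hv'_def, Pi.smul_apply, smul_eq_mul, hαv]
          ring
        simp [hc_def, this]
      exact hj2 (h ▸ hj0)
  have hE01 : E 0 ≠ E 1 := fun h => hiE1 (h ▸ hiE0)
  have hE12 : E 1 ≠ E 2 := fun h => hiE1 (h.symm ▸ hiE2)
  -- the polynomials
  obtain ⟨P, hP0, hP1, hP2⟩ :
      ∃ P : Fin 3 → MvPolynomial (Fin n) K,
        P 0 = (∏ r ∈ S' \ E 0, X r) ∧ P 1 = (∏ r ∈ S' \ E 1, X r) ∧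
          P 2 = -(∏ r ∈ S' \ E 2, X r) :=
    ⟨![∏ r ∈ S' \ E 0, X r, ∏ r ∈ S' \ E 1, X r, -(∏ r ∈ S' \ E 2, X r)],
      rfl, rfl, rfl⟩
  refine ⟨S'.card - 1, 3, E, c, P, ?_, ?_, ?_, ?_, ?_, ?_, ?_, ?_⟩
  · -- t + 1 ≤ sInf
    rw [Nat.sub_add_cancel hS'pos, hS'card, hSupp]
  · -- injectivity
    intro x y h
    fin_cases x <;> fin_cases y <;> simp_all <;>
      first
        | rfl
        | exact absurd h hE01 | exact absurd h hE02 | exact absurd h hE12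
        | exact absurd h.symm hE01 | exact absurd h.symm hE02 | exact absurd h.symm hE12
  · -- dependence of columns
    intro k hli
    rw [Fintype.linearIndependent_iff] at hli
    obtain ⟨r, hr⟩ : ∃ r, r ∈ E k := Finset.Nonempty.exists_mem (by
      obtain ⟨p, hp⟩ : ∃ p, c k p ≠ 0 := by
        by_contra h; push_neg at h; exact hc0 k (funext h)
      exact ⟨p, (hmemE k p).mpr hp⟩)
    have := hli (fun q => c k q.1) ?_ ⟨r, hr⟩
    · exact ((hmemE k r).mp hr) this
    · funext s
      have hmv := congrFun ((hH (c k)).mp (hcCo k)) s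
      simp only [Matrix.mulVec, dotProduct, Pi.zero_apply] at hmv
      calc (∑ q : (E k : Finset (Fin n)), c k q.1 • fun t => H t q.1) s
          = ∑ q ∈ E k, c k q * H s q := by
            rw [Finset.sum_apply]
            rw [← Finset.sum_attach (E k) (fun q => c k q * H s q)]
            rfl
        _ = ∑ q, c k q * H s q := by
            refine Finset.sum_subset (Finset.subset_univ _) fun q _ hq => ?_
            rw [hmemE, not_not] at hq
            rw [hq, zero_mul]
        _ = 0 := by rw [← hmv]; exact Finset.sum_congr rfl fun q _ => mul_comm _ _
  · -- nonzero coefficients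
    intro k r hr
    exact (hmemE k r).mp hr
  · -- dependency relation
    intro k
    have hfull : ∑ q, c k q • ℓ q = 0 :=
      dep_sum H ℓ hℓ (c k) ((hH (c k)).mp (hcCo k))
    rw [← hfull]
    refine Finset.sum_subset (Finset.subset_univ _) fun q _ hq => ?_
    rw [hmemE, not_not] at hq
    simp [hq]
  · -- some P nonzero
    exact ⟨0, by rw [hP0]; exact prodX_ne_zero _⟩
  · -- homogeneity and degrees
    intro k _
    have hcard : ∀ k', (S' \ E k').card + (E k').card = S'.card - 1 + 1 := by
      intro k'
      rw [Finset.card_sdiff_add_card_eq_card (hES' k'), Nat.sub_add_cancel hS'pos]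
    refine ⟨(S' \ E k).card, ?_, hcard k⟩
    have h3 : k = 0 ∨ k = 1 ∨ k = 2 := by fin_cases k <;> decide
    rcases h3 with rfl | rfl | rfl
    · rw [hP0]; exact prodX_homog _
    · rw [hP1]; exact prodX_homog _
    · rw [hP2]; exact (prodX_homog _).neg
  · -- the syzygy
    have hkey : ∀ k, (∏ r ∈ S' \ E k, (X r : MvPolynomial (Fin n) K)) *
        (∑ q ∈ E k, C (c k q) * ∏ r ∈ (E k).erase q, X r)
        = ∑ q ∈ S', C (c k q) * ∏ r ∈ S'.erase q, X r := by
      intro k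
      refine key_identity S' (E k) (hES' k) (c k) fun q _ hq => ?_
      rw [hmemE, not_not] at hq
      exact hq
    rw [Fin.sum_univ_three]
    rw [hP0, hP1, hP2, neg_mul, hkey 0, hkey 1, hkey 2]
    have hadd : ∀ q, c 2 q = c 0 q + c 1 q := by
      intro q; simp [hc_def, hw_def]
    have : (∑ q ∈ S', C (c 2 q) * ∏ r ∈ S'.erase q, (X r : MvPolynomial (Fin n) K))
        = (∑ q ∈ S', C (c 0 q) * ∏ r ∈ S'.erase q, X r)
          + ∑ q ∈ S', C (c 1 q) * ∏ r ∈ S'.erase q, X r := by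
      rw [← Finset.sum_add_distrib]
      exact Finset.sum_congr rfl fun q _ => by rw [hadd q, map_add, add_mul]
    rw [this]
    ring
end
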